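/- arXiv:1212.3902 — 2 statements merged into one kernel-verified Lean document; each statement's English description precedes it below -/
import Mathlib

section
/- Let s > 0, t > 0, α > 0, τ₁ ≥ 0, τ₂ > 0, 1 ≤ q < 4, 1 ≤ p < 4 (p rational with odd denominator). Define I(s,t) = inf { E(f,g) : (f,g) ∈ H¹_ℂ × H¹, ‖f‖²_{L²} = s, ‖g‖²_{L²} = t }, where E(f,g) = ∫ (|f'|² + (g')² − β₁|f|^{q+2} − β₂g^{p+2} − α|f|²g) dx with β₁ = 2τ₁/(q+2), β₂ = 2τ₂/((p+1)(p+2)). Then I(s,t) < 0. -/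
/-!
Two facts give `I(s,t) < 0`. First, the admissible energies are bounded below (otherwise
`sInf` would return the junk value `0`): in one dimension `‖u‖∞⁴ ≤ 4 ‖u‖₂² ‖u'‖₂²`, so with
`X = ‖f'‖₂²`, `Y = ‖g'‖₂²` the three nonlinear terms are bounded by constant multiples of
`X ^ (q/4)`, `Y ^ (p/4)` and `Y ^ (1/4)`, exponents `< 1` that the kinetic energy `X + Y`
absorbs. Second, the dilation `f_θ(x) = θ^(1/2) f(θx)` preserves `L²` norms, multiplies the
kinetic energy by `θ²` and the coupling `∫ |f|² g` by `θ^(1/2)`; the two other nonlinear terms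
are nonpositive for `g ≥ 0`. A pair of positive Gaussians therefore has negative energy once
`θ` is small.
-/

open MeasureTheory

noncomputable section

def H1C (f : ℝ → ℂ) : Prop :=
  Differentiable ℝ f ∧ MemLp f 2 ∧ MemLp (deriv f) 2

def H1R (g : ℝ → ℝ) : Prop :=
  Differentiable ℝ g ∧ MemLp g 2 ∧ MemLp (deriv g) 2

/-- Energy density: `P y` plays the role of `y^(p+2)` for `p` rational with odd
denominator, so that `P y ≤ |y|^(p+2)` and `P y = y^(p+2)` for `y ≥ 0`. -/
def Edens (β₁ β₂ α q : ℝ) (P : ℝ → ℝ) (f : ℝ → ℂ) (g : ℝ → ℝ) (x : ℝ) : ℝ :=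
  ‖deriv f x‖ ^ 2 + (deriv g x) ^ 2 - β₁ * ‖f x‖ ^ (q + 2) - β₂ * P (g x)
    - α * ‖f x‖ ^ 2 * g x

def IVals (β₁ β₂ α q : ℝ) (P : ℝ → ℝ) (s t : ℝ) : Set ℝ :=
  { e | ∃ f : ℝ → ℂ, ∃ g : ℝ → ℝ, H1C f ∧ H1R g ∧
      Integrable (Edens β₁ β₂ α q P f g) ∧
      (∫ x : ℝ, ‖f x‖ ^ 2) = s ∧ (∫ x : ℝ, (g x) ^ 2) = t ∧
      e = ∫ x : ℝ, Edens β₁ β₂ α q P f g x }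

/-- The constrained infimum `I(s,t)`. -/
def Ifun (β₁ β₂ α q : ℝ) (P : ℝ → ℝ) (s t : ℝ) : ℝ :=
  sInf (IVals β₁ β₂ α q P s t)

open Filter Topology Set

lemma exists_mul_rpow_le_mul_add {c θ ε : ℝ} (hc : 0 ≤ c) (hθ₀ : 0 ≤ θ) (hθ₁ : θ < 1)
    (hε : 0 < ε) : ∃ C, ∀ Z, 0 ≤ Z → c * Z ^ θ ≤ ε * Z + C := by
  -- beyond `N` one has `c * Z ^ θ ≤ ε * Z`
  set N := (c / ε) ^ (1 - θ)⁻¹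
  have hN : 0 ≤ N := by positivity
  refine ⟨c * N ^ θ, fun Z hZ => ?_⟩
  rcases le_or_gt Z N with hZN | hNZ
  · have : c * Z ^ θ ≤ c * N ^ θ := by gcongr
    linarith [mul_nonneg hε.le hZ]
  · have hZpos : 0 < Z := hN.trans_lt hNZ
    have hcZ : c ≤ ε * Z ^ (1 - θ) := by
      have : N ^ (1 - θ) = c / ε := by
        rw [← Real.rpow_mul (by positivity), inv_mul_cancel₀ (by linarith), Real.rpow_one]
      rw [← div_le_iff₀' hε, ← this]
      exact Real.rpow_le_rpow hN hNZ.le (by linarith)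
    calc c * Z ^ θ ≤ ε * Z ^ (1 - θ) * Z ^ θ := by gcongr
      _ = ε * Z := by rw [mul_assoc, ← Real.rpow_add hZpos, sub_add_cancel, Real.rpow_one]
      _ ≤ ε * Z + c * N ^ θ := le_add_of_nonneg_right (by positivity)

lemma norm_le_integral_norm_deriv {E : Type*} [NormedAddCommGroup E] [NormedSpace ℝ E]
    [CompleteSpace E] {u u' : ℝ → E} (hu : ∀ x, HasDerivAt u (u' x) x) (hi : Integrable u)
    (hi' : Integrable u') (x : ℝ) : ‖u x‖ ≤ ∫ y, ‖u' y‖ := by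
  have hlim : Tendsto u atBot (𝓝 0) :=
    tendsto_zero_of_hasDerivAt_of_integrableOn_Iic (a := x) (fun y _ => hu y)
      hi'.integrableOn hi.integrableOn
  have hftc : ∫ y in Iic x, u' y = u x := by
    rw [integral_Iic_of_hasDerivAt_of_tendsto' (fun y _ => hu y) hi'.integrableOn hlim, sub_zero]
  calc ‖u x‖ = ‖∫ y in Iic x, u' y‖ := by rw [hftc]
    _ ≤ ∫ y in Iic x, ‖u' y‖ := norm_integral_le_integral_norm _
    _ ≤ ∫ y, ‖u' y‖ := setIntegral_le_integral hi'.norm (ae_of_all _ fun _ => norm_nonneg _)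

lemma sq_integral_mul_le_integral_sq_mul_integral_sq {f g : ℝ → ℝ} (hf₀ : 0 ≤ f) (hg₀ : 0 ≤ g)
    (hf : MemLp f 2) (hg : MemLp g 2) : (∫ x, f x * g x) ^ 2 ≤ (∫ x, f x ^ 2) * ∫ x, g x ^ 2 := by
  have h := integral_mul_le_Lp_mul_Lq_of_nonneg Real.HolderConjugate.two_two
    (ae_of_all _ hf₀) (ae_of_all _ hg₀) (by simpa using hf) (by simpa using hg)
  have hA : 0 ≤ ∫ x, f x ^ 2 := integral_nonneg fun x => sq_nonneg _
  have hB : 0 ≤ ∫ x, g x ^ 2 := integral_nonneg fun x => sq_nonneg _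
  have h0 : 0 ≤ ∫ x, f x * g x := integral_nonneg fun x => mul_nonneg (hf₀ x) (hg₀ x)
  simp only [Real.rpow_two, ← Real.sqrt_eq_rpow] at h
  calc (∫ x, f x * g x) ^ 2 ≤ (√(∫ x, f x ^ 2) * √(∫ x, g x ^ 2)) ^ 2 := by gcongr
    _ = _ := by rw [mul_pow, Real.sq_sqrt hA, Real.sq_sqrt hB]

lemma norm_pow_four_le_integral_mul_integral_deriv {E : Type*} [NormedAddCommGroup E]
    [InnerProductSpace ℝ E] {f : ℝ → E} (hd : Differentiable ℝ f) (hf : MemLp f 2)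
    (hf' : MemLp (deriv f) 2) (x : ℝ) :
    ‖f x‖ ^ 4 ≤ 4 * (∫ y, ‖f y‖ ^ 2) * ∫ y, ‖deriv f y‖ ^ 2 := by
  have hprod : Integrable (fun y => ‖f y‖ * ‖deriv f y‖) := hf.norm.integrable_mul hf'.norm
  have hderiv : ∀ y, HasDerivAt (‖f ·‖ ^ 2) (2 * inner ℝ (f y) (deriv f y)) y :=
    fun y => (hd y).hasDerivAt.norm_sq
  have hinner_le : ∀ y, ‖2 * inner ℝ (f y) (deriv f y)‖ ≤ 2 * (‖f y‖ * ‖deriv f y‖) := by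
    intro y
    rw [norm_mul, Real.norm_two]
    gcongr
    exact abs_real_inner_le_norm _ _
  have hinner : Integrable (fun y => 2 * inner ℝ (f y) (deriv f y)) :=
    (hprod.const_mul 2).mono' ((hd.continuous.aestronglyMeasurable.inner
      hf'.aestronglyMeasurable).const_mul 2) (ae_of_all _ hinner_le)
  have hsup : ‖f x‖ ^ 2 ≤ 2 * ∫ y, ‖f y‖ * ‖deriv f y‖ := by
    have h := norm_le_integral_norm_deriv hderiv
      ((memLp_two_iff_integrable_sq_norm hf.1).1 hf) hinner x
    rw [← integral_const_mul]
    exact (le_abs_self _).trans (h.trans (integral_mono hinner.norm (hprod.const_mul 2) hinner_le))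
  have hCS := sq_integral_mul_le_integral_sq_mul_integral_sq (fun y => norm_nonneg (f y))
    (fun y => norm_nonneg (deriv f y)) hf.norm hf'.norm
  calc ‖f x‖ ^ 4 = (‖f x‖ ^ 2) ^ 2 := by ring
    _ ≤ (2 * ∫ y, ‖f y‖ * ‖deriv f y‖) ^ 2 := by gcongr
    _ ≤ 4 * (∫ y, ‖f y‖ ^ 2) * ∫ y, ‖deriv f y‖ ^ 2 := by rw [mul_pow]; linarith

lemma pow_four_le_of_H1R {g : ℝ → ℝ} (hg : H1R g) (x : ℝ) :
    g x ^ 4 ≤ 4 * (∫ y, g y ^ 2) * ∫ y, deriv g y ^ 2 := by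
  have h := norm_pow_four_le_integral_mul_integral_deriv hg.1 hg.2.1 hg.2.2 x
  rw [Real.norm_eq_abs, (by decide : Even 4).pow_abs] at h
  simpa only [Real.norm_eq_abs, sq_abs] using h

lemma rpow_add_two_le {n M r : ℝ} (hn : 0 ≤ n) (hM : n ^ 4 ≤ M) (hr : 0 ≤ r) :
    n ^ (r + 2) ≤ M ^ (r / 4) * n ^ 2 := by
  have hsplit : n ^ (r + 2) = (n ^ 4) ^ (r / 4) * n ^ 2 := by
    rw [Real.rpow_add' hn (by linarith), ← Real.rpow_natCast n 4, ← Real.rpow_mul hn,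
      Real.rpow_two]
    ring_nf
  rw [hsplit]
  gcongr

lemma le_rpow_quarter_of_pow_four_le {y M : ℝ} (hM : y ^ 4 ≤ M) : y ≤ M ^ (1 / 4 : ℝ) := by
  have h := Real.pow_rpow_inv_natCast (abs_nonneg y) four_ne_zero
  rw [(by decide : Even 4).pow_abs, Nat.cast_ofNat, inv_eq_one_div] at h
  calc y ≤ |y| := le_abs_self y
    _ = (y ^ 4) ^ (1 / 4 : ℝ) := h.symm
    _ ≤ M ^ (1 / 4 : ℝ) := by gcongr

def potentialDens (β₁ β₂ α q : ℝ) (P : ℝ → ℝ) (f : ℝ → ℂ) (g : ℝ → ℝ) (x : ℝ) : ℝ :=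
  β₁ * ‖f x‖ ^ (q + 2) + β₂ * P (g x) + α * ‖f x‖ ^ 2 * g x

lemma Edens_eq_sub_potentialDens (β₁ β₂ α q : ℝ) (P : ℝ → ℝ) (f : ℝ → ℂ) (g : ℝ → ℝ) :
    Edens β₁ β₂ α q P f g
      = (fun x => ‖deriv f x‖ ^ 2 + deriv g x ^ 2) - potentialDens β₁ β₂ α q P f g := by
  funext x
  simp only [Edens, potentialDens, Pi.sub_apply]
  ring

section Potential

variable {β₁ β₂ α q p : ℝ} {P : ℝ → ℝ} {f : ℝ → ℂ} {g : ℝ → ℝ} {s t X Y : ℝ}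

lemma potentialDens_le (hβ₁ : 0 ≤ β₁) (hβ₂ : 0 ≤ β₂) (hα : 0 ≤ α) (hq : 0 ≤ q) (hp : 0 ≤ p)
    {Mf Mg x : ℝ} (hP : P (g x) ≤ |g x| ^ (p + 2)) (hf : ‖f x‖ ^ 4 ≤ Mf)
    (hg : g x ^ 4 ≤ Mg) :
    potentialDens β₁ β₂ α q P f g x
      ≤ (β₁ * Mf ^ (q / 4) + α * Mg ^ (1 / 4 : ℝ)) * ‖f x‖ ^ 2 + β₂ * Mg ^ (p / 4) * g x ^ 2 := by
  have h₁ : ‖f x‖ ^ (q + 2) ≤ Mf ^ (q / 4) * ‖f x‖ ^ 2 := rpow_add_two_le (norm_nonneg _) hf hq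
  have h₂ : P (g x) ≤ Mg ^ (p / 4) * g x ^ 2 := by
    refine hP.trans ?_
    simpa only [sq_abs] using rpow_add_two_le (abs_nonneg (g x)) (by rwa [pow_abs,
      abs_of_nonneg (by positivity)]) hp
  have h₃ : g x ≤ Mg ^ (1 / 4 : ℝ) := le_rpow_quarter_of_pow_four_le hg
  simp only [potentialDens]
  have := mul_le_mul_of_nonneg_left h₁ hβ₁
  have := mul_le_mul_of_nonneg_left h₂ hβ₂
  have := mul_le_mul_of_nonneg_left h₃ (mul_nonneg hα (sq_nonneg ‖f x‖))
  linarith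

lemma integrable_norm_sq_add_sq (hf : H1C f) (hg : H1R g) (a b : ℝ) :
    Integrable (fun x => a * ‖f x‖ ^ 2 + b * g x ^ 2) :=
  (((memLp_two_iff_integrable_sq_norm hf.2.1.1).1 hf.2.1).const_mul a).add
    (hg.2.1.integrable_sq.const_mul b)

lemma potentialDens_le_of_H1 (hβ₁ : 0 ≤ β₁) (hβ₂ : 0 ≤ β₂) (hα : 0 ≤ α) (hq : 0 ≤ q)
    (hp : 0 ≤ p) (hP : ∀ x, P (g x) ≤ |g x| ^ (p + 2)) (hf : H1C f) (hg : H1R g)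
    (hs : ∫ x, ‖f x‖ ^ 2 = s) (ht : ∫ x, g x ^ 2 = t) (hX : ∫ x, ‖deriv f x‖ ^ 2 = X)
    (hY : ∫ x, deriv g x ^ 2 = Y) (x : ℝ) :
    potentialDens β₁ β₂ α q P f g x ≤ (β₁ * (4 * s * X) ^ (q / 4) + α * (4 * t * Y) ^ (1 / 4 : ℝ))
      * ‖f x‖ ^ 2 + β₂ * (4 * t * Y) ^ (p / 4) * g x ^ 2 := by
  refine potentialDens_le hβ₁ hβ₂ hα hq hp (P := P) (hP x) ?_ ?_
  · simpa only [hs, hX] using norm_pow_four_le_integral_mul_integral_deriv hf.1 hf.2.1 hf.2.2 x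
  · simpa only [ht, hY] using pow_four_le_of_H1R hg x

lemma integral_potentialDens_le (hβ₁ : 0 ≤ β₁) (hβ₂ : 0 ≤ β₂) (hα : 0 ≤ α) (hq : 0 ≤ q)
    (hp : 0 ≤ p) (hP : ∀ x, P (g x) ≤ |g x| ^ (p + 2)) (hf : H1C f) (hg : H1R g)
    (hs : ∫ x, ‖f x‖ ^ 2 = s) (ht : ∫ x, g x ^ 2 = t) (hX : ∫ x, ‖deriv f x‖ ^ 2 = X)
    (hY : ∫ x, deriv g x ^ 2 = Y) (hint : Integrable (potentialDens β₁ β₂ α q P f g)) :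
    ∫ x, potentialDens β₁ β₂ α q P f g x
      ≤ (β₁ * (4 * s * X) ^ (q / 4) + α * (4 * t * Y) ^ (1 / 4 : ℝ)) * s
        + β₂ * (4 * t * Y) ^ (p / 4) * t := by
  refine (integral_mono hint (integrable_norm_sq_add_sq hf hg _ _)
    (potentialDens_le_of_H1 hβ₁ hβ₂ hα hq hp hP hf hg hs ht hX hY)).trans_eq ?_
  rw [integral_add (((memLp_two_iff_integrable_sq_norm hf.2.1.1).1 hf.2.1).const_mul _)
    (hg.2.1.integrable_sq.const_mul _), integral_const_mul, integral_const_mul, hs, ht]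

lemma integrable_potentialDens (hβ₁ : 0 ≤ β₁) (hβ₂ : 0 ≤ β₂) (hα : 0 ≤ α) (hq : 0 ≤ q)
    (hp : 0 ≤ p) (hP : ∀ y, 0 ≤ y → P y = y ^ (p + 2)) (hf : H1C f) (hg : H1R g)
    (hg₀ : ∀ x, 0 ≤ g x) : Integrable (potentialDens β₁ β₂ α q P f g) := by
  have hPg : ∀ x, P (g x) = |g x| ^ (p + 2) := fun x => by
    rw [hP _ (hg₀ x), abs_of_nonneg (hg₀ x)]
  have hpot : potentialDens β₁ β₂ α q P f g
      = fun x => β₁ * ‖f x‖ ^ (q + 2) + β₂ * |g x| ^ (p + 2) + α * ‖f x‖ ^ 2 * g x :=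
    funext fun x => by rw [potentialDens, hPg]
  have hcont : Continuous (potentialDens β₁ β₂ α q P f g) := by
    have hfc := hf.1.continuous
    have hgc := hg.1.continuous
    rw [hpot]
    fun_prop (disch := linarith)
  have hnonneg : ∀ x, 0 ≤ potentialDens β₁ β₂ α q P f g x := fun x => by
    rw [hpot]
    have := hg₀ x
    positivity
  have hbound :=
    potentialDens_le_of_H1 hβ₁ hβ₂ hα hq hp (fun x => (hPg x).le) hf hg rfl rfl rfl rfl
  exact (integrable_norm_sq_add_sq hf hg _ _).mono' hcont.aestronglyMeasurable
    (ae_of_all _ fun x => (Real.norm_of_nonneg (hnonneg x)).trans_le (hbound x))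

lemma integrable_deriv_sq_add_sq (hf : H1C f) (hg : H1R g) :
    Integrable (fun x => ‖deriv f x‖ ^ 2 + deriv g x ^ 2) :=
  ((memLp_two_iff_integrable_sq_norm hf.2.2.1).1 hf.2.2).add hg.2.2.integrable_sq

lemma integrable_Edens_iff (hf : H1C f) (hg : H1R g) :
    Integrable (Edens β₁ β₂ α q P f g) ↔ Integrable (potentialDens β₁ β₂ α q P f g) := by
  have hgrad := integrable_deriv_sq_add_sq hf hg
  rw [Edens_eq_sub_potentialDens]
  exact ⟨fun h => by simpa using hgrad.sub h, hgrad.sub⟩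

lemma integral_Edens (hf : H1C f) (hg : H1R g)
    (hint : Integrable (potentialDens β₁ β₂ α q P f g)) :
    ∫ x, Edens β₁ β₂ α q P f g x
      = (∫ x, ‖deriv f x‖ ^ 2) + (∫ x, deriv g x ^ 2) - ∫ x, potentialDens β₁ β₂ α q P f g x := by
  rw [Edens_eq_sub_potentialDens, integral_sub' (integrable_deriv_sq_add_sq hf hg) hint,
    integral_add ((memLp_two_iff_integrable_sq_norm hf.2.2.1).1 hf.2.2) hg.2.2.integrable_sq]

end Potential

lemma IVals_bddBelow {β₁ β₂ α q p s t : ℝ} {P : ℝ → ℝ} (hβ₁ : 0 ≤ β₁) (hβ₂ : 0 ≤ β₂)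
    (hα : 0 ≤ α) (hq₀ : 0 ≤ q) (hq₄ : q < 4) (hp₀ : 0 ≤ p) (hp₄ : p < 4)
    (hP : ∀ y, P y ≤ |y| ^ (p + 2)) (hs : 0 ≤ s) (ht : 0 ≤ t) :
    BddBelow (IVals β₁ β₂ α q P s t) := by
  obtain ⟨C₁, hC₁⟩ := exists_mul_rpow_le_mul_add (c := β₁ * (4 * s) ^ (q / 4) * s) (θ := q / 4)
    (ε := 1 / 2) (by positivity) (by positivity) (by linarith) (by norm_num)
  obtain ⟨C₂, hC₂⟩ := exists_mul_rpow_le_mul_add (c := β₂ * (4 * t) ^ (p / 4) * t) (θ := p / 4)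
    (ε := 1 / 2) (by positivity) (by positivity) (by linarith) (by norm_num)
  obtain ⟨C₃, hC₃⟩ := exists_mul_rpow_le_mul_add (c := α * (4 * t) ^ (1 / 4 : ℝ) * s)
    (θ := 1 / 4) (ε := 1 / 2) (by positivity) (by norm_num) (by norm_num) (by norm_num)
  refine ⟨-(C₁ + C₂ + C₃), ?_⟩
  rintro e ⟨f, g, hf, hg, hint, hfs, hgt, rfl⟩
  set X := ∫ x, ‖deriv f x‖ ^ 2
  set Y := ∫ x, deriv g x ^ 2
  have hX : 0 ≤ X := integral_nonneg fun x => sq_nonneg _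
  have hY : 0 ≤ Y := integral_nonneg fun x => sq_nonneg _
  have hpot := (integrable_Edens_iff hf hg).1 hint
  have hbound :=
    integral_potentialDens_le hβ₁ hβ₂ hα hq₀ hp₀ (fun x => hP (g x)) hf hg hfs hgt rfl rfl hpot
  have hsplit : (β₁ * (4 * s * X) ^ (q / 4) + α * (4 * t * Y) ^ (1 / 4 : ℝ)) * s
      + β₂ * (4 * t * Y) ^ (p / 4) * t
      = β₁ * (4 * s) ^ (q / 4) * s * X ^ (q / 4) + β₂ * (4 * t) ^ (p / 4) * t * Y ^ (p / 4)
        + α * (4 * t) ^ (1 / 4 : ℝ) * s * Y ^ (1 / 4 : ℝ) := by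
    rw [Real.mul_rpow (by positivity) hX, Real.mul_rpow (by positivity) hY,
      Real.mul_rpow (by positivity) hY]
    ring
  rw [integral_Edens hf hg hpot]
  linarith [hC₁ X hX, hC₂ Y hY, hC₃ Y hY]

section Dilation

variable {E : Type*} [NormedAddCommGroup E] [NormedSpace ℝ E] {θ : ℝ} {f : ℝ → E}

def dilate (θ : ℝ) (f : ℝ → E) (x : ℝ) : E := √θ • f (θ * x)

lemma hasDerivAt_dilate {f' : E} {x : ℝ} (hf : HasDerivAt f f' (θ * x)) :
    HasDerivAt (dilate θ f) (θ • √θ • f') x := by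
  have h := (hf.scomp x ((hasDerivAt_id x).const_mul θ)).const_smul √θ
  rw [mul_one, smul_comm] at h
  exact h

lemma differentiable_dilate (hf : Differentiable ℝ f) : Differentiable ℝ (dilate θ f) :=
  fun _ => (hasDerivAt_dilate (hf _).hasDerivAt).differentiableAt

lemma deriv_dilate (hf : Differentiable ℝ f) : deriv (dilate θ f) = θ • dilate θ (deriv f) :=
  funext fun _ => (hasDerivAt_dilate (hf _).hasDerivAt).deriv

lemma memLp_dilate {p : ENNReal} (hθ : θ ≠ 0) (hf : MemLp f p) : MemLp (dilate θ f) p := by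
  have hmap : Measure.map (θ * ·) volume = ENNReal.ofReal |θ⁻¹| • volume :=
    Real.map_volume_mul_left hθ
  have hcomp : MemLp (fun x => f (θ * x)) p :=
    (hmap ▸ hf.smul_measure ENNReal.ofReal_ne_top).comp_of_map
      (measurable_const_mul θ).aemeasurable
  exact hcomp.const_smul √θ

lemma integral_norm_dilate_sq (hθ : 0 < θ) (f : ℝ → E) :
    ∫ x, ‖dilate θ f x‖ ^ 2 = ∫ x, ‖f x‖ ^ 2 := by
  simp only [dilate, norm_smul, mul_pow, Real.norm_of_nonneg (Real.sqrt_nonneg θ),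
    Real.sq_sqrt hθ.le]
  rw [integral_const_mul, Measure.integral_comp_mul_left (fun y => ‖f y‖ ^ 2),
    abs_of_pos (inv_pos.2 hθ), smul_eq_mul, ← mul_assoc, mul_inv_cancel₀ hθ.ne', one_mul]

lemma integral_norm_deriv_dilate_sq (hθ : 0 < θ) (hf : Differentiable ℝ f) :
    ∫ x, ‖deriv (dilate θ f) x‖ ^ 2 = θ ^ 2 * ∫ x, ‖deriv f x‖ ^ 2 := by
  simp only [deriv_dilate hf, Pi.smul_apply, norm_smul, mul_pow, Real.norm_of_nonneg hθ.le]
  rw [integral_const_mul, integral_norm_dilate_sq hθ]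

lemma integral_norm_dilate_sq_mul_dilate (hθ : 0 < θ) (f : ℝ → E) (g : ℝ → ℝ) :
    ∫ x, ‖dilate θ f x‖ ^ 2 * dilate θ g x = √θ * ∫ x, ‖f x‖ ^ 2 * g x := by
  have h : ∀ x, ‖dilate θ f x‖ ^ 2 * dilate θ g x
      = (θ * √θ) * (‖f (θ * x)‖ ^ 2 * g (θ * x)) := fun x => by
    simp only [dilate, norm_smul, mul_pow, Real.norm_of_nonneg (Real.sqrt_nonneg θ),
      Real.sq_sqrt hθ.le, smul_eq_mul]
    ring
  simp only [h]
  rw [integral_const_mul, Measure.integral_comp_mul_left (fun y => ‖f y‖ ^ 2 * g y),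
    abs_of_pos (inv_pos.2 hθ), smul_eq_mul]
  field_simp

end Dilation

lemma H1C.dilate {θ : ℝ} {f : ℝ → ℂ} (hθ : θ ≠ 0) (hf : H1C f) : H1C (dilate θ f) :=
  ⟨differentiable_dilate hf.1, memLp_dilate hθ hf.2.1,
    deriv_dilate hf.1 ▸ (memLp_dilate hθ hf.2.2).const_smul θ⟩

lemma H1R.dilate {θ : ℝ} {g : ℝ → ℝ} (hθ : θ ≠ 0) (hg : H1R g) : H1R (dilate θ g) :=
  ⟨differentiable_dilate hg.1, memLp_dilate hθ hg.2.1,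
    deriv_dilate hg.1 ▸ (memLp_dilate hθ hg.2.2).const_smul θ⟩

lemma exists_sq_mul_lt_mul_sqrt {D c : ℝ} (hD : 0 ≤ D) (hc : 0 < c) :
    ∃ θ > 0, θ ^ 2 * D < c * √θ := by
  set r := min 1 (c / (D + 1))
  have hr : 0 < r := lt_min one_pos (by positivity)
  have hr₁ : r ≤ 1 := min_le_left _ _
  have hrc : r * (D + 1) ≤ c := (le_div_iff₀ (by positivity)).1 (min_le_right _ _)
  refine ⟨r ^ 2, by positivity, ?_⟩
  rw [Real.sqrt_sq hr.le]
  have hr₃ : r ^ 3 ≤ r := pow_le_of_le_one hr.le hr₁ (by norm_num)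
  nlinarith [mul_le_mul_of_nonneg_right hr₃ hD]

lemma mul_integral_norm_sq_mul_le_integral_potentialDens {β₁ β₂ α q p : ℝ} {P : ℝ → ℝ}
    {f : ℝ → ℂ} {g : ℝ → ℝ} (hβ₁ : 0 ≤ β₁) (hβ₂ : 0 ≤ β₂) (hα : 0 ≤ α)
    (hP : ∀ y, 0 ≤ y → P y = y ^ (p + 2)) (hg₀ : ∀ x, 0 ≤ g x)
    (hint : Integrable (potentialDens β₁ β₂ α q P f g)) :
    α * ∫ x, ‖f x‖ ^ 2 * g x ≤ ∫ x, potentialDens β₁ β₂ α q P f g x := by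
  rw [← integral_const_mul]
  refine integral_mono_of_nonneg ?_ hint (ae_of_all _ fun x => ?_)
  · exact ae_of_all _ fun x => mul_nonneg hα (mul_nonneg (sq_nonneg _) (hg₀ x))
  · have h₁ : 0 ≤ β₁ * ‖f x‖ ^ (q + 2) := by positivity
    have h₂ : 0 ≤ β₂ * P (g x) := by rw [hP _ (hg₀ x)]; have := hg₀ x; positivity
    simp only [potentialDens]
    linarith

lemma exists_neg_mem_IVals_of_coupling_pos {β₁ β₂ α q p : ℝ} {P : ℝ → ℝ} {f : ℝ → ℂ}
    {g : ℝ → ℝ} (hβ₁ : 0 ≤ β₁) (hβ₂ : 0 ≤ β₂) (hα : 0 < α) (hq : 0 ≤ q) (hp : 0 ≤ p)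
    (hP : ∀ y, 0 ≤ y → P y = y ^ (p + 2)) (hf : H1C f) (hg : H1R g) (hg₀ : ∀ x, 0 ≤ g x)
    (hc : 0 < ∫ x, ‖f x‖ ^ 2 * g x) :
    ∃ e ∈ IVals β₁ β₂ α q P (∫ x, ‖f x‖ ^ 2) (∫ x, g x ^ 2), e < 0 := by
  obtain ⟨θ, hθ, hθneg⟩ := exists_sq_mul_lt_mul_sqrt
    (add_nonneg (integral_nonneg fun x => sq_nonneg ‖deriv f x‖)
      (integral_nonneg fun x => sq_nonneg (deriv g x))) (mul_pos hα hc)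
  have hfθ := hf.dilate hθ.ne'
  have hgθ := hg.dilate hθ.ne'
  have hgθ₀ : ∀ x, 0 ≤ dilate θ g x := fun x => mul_nonneg (Real.sqrt_nonneg θ) (hg₀ _)
  have hpot := integrable_potentialDens hβ₁ hβ₂ hα.le hq hp hP hfθ hgθ hgθ₀
  refine ⟨_, ⟨dilate θ f, dilate θ g, hfθ, hgθ, (integrable_Edens_iff hfθ hgθ).2 hpot,
    integral_norm_dilate_sq hθ f, ?_, rfl⟩, ?_⟩
  · simpa only [Real.norm_eq_abs, sq_abs] using integral_norm_dilate_sq hθ g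
  have hcoupling :=
    mul_integral_norm_sq_mul_le_integral_potentialDens hβ₁ hβ₂ hα.le hP hgθ₀ hpot
  rw [integral_norm_dilate_sq_mul_dilate hθ] at hcoupling
  have hgrad : ∫ x, deriv (dilate θ g) x ^ 2 = θ ^ 2 * ∫ x, deriv g x ^ 2 := by
    simpa only [Real.norm_eq_abs, sq_abs] using integral_norm_deriv_dilate_sq hθ hg.1
  rw [integral_Edens hfθ hgθ hpot, integral_norm_deriv_dilate_sq hθ hf.1, hgrad]
  linarith

lemma H1R.const_mul {u : ℝ → ℝ} (hu : H1R u) (a : ℝ) : H1R (fun x => a * u x) :=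
  ⟨hu.1.const_mul a, hu.2.1.const_mul a, by
    rw [deriv_const_mul_field']
    exact hu.2.2.const_mul a⟩

lemma H1R.ofReal {u : ℝ → ℝ} (hu : H1R u) : H1C (fun x => (u x : ℂ)) := by
  have hderiv : deriv (fun x => (u x : ℂ)) = fun x => ((deriv u x : ℝ) : ℂ) :=
    funext fun x => (hu.1 x).hasDerivAt.ofReal_comp.deriv
  exact ⟨fun x => (hu.1 x).hasDerivAt.ofReal_comp.differentiableAt, hu.2.1.ofReal,
    hderiv ▸ hu.2.2.ofReal⟩

lemma exp_neg_sq_pow (n : ℕ) (x : ℝ) : Real.exp (-x ^ 2) ^ n = Real.exp (-n * x ^ 2) := by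
  rw [← Real.exp_nat_mul]
  ring_nf

lemma h1R_exp_neg_sq : H1R fun x => Real.exp (-x ^ 2) := by
  have hderiv : deriv (fun x => Real.exp (-x ^ 2)) = fun x => -2 * x * Real.exp (-x ^ 2) := by
    funext x
    have h : HasDerivAt (fun x => Real.exp (-x ^ 2)) (Real.exp (-x ^ 2) * -(2 * x)) x := by
      simpa using ((hasDerivAt_pow 2 x).neg).exp
    rw [h.deriv]
    ring
  refine ⟨by fun_prop, ?_, ?_⟩
  · rw [memLp_two_iff_integrable_sq (by fun_prop)]
    simpa only [exp_neg_sq_pow, Nat.cast_ofNat] using integrable_exp_neg_mul_sq (b := 2) two_pos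
  · rw [hderiv, memLp_two_iff_integrable_sq (by fun_prop)]
    have h := integrable_rpow_mul_exp_neg_mul_sq (b := 2) two_pos (s := 2) (by norm_num)
    refine (h.const_mul 4).congr (ae_of_all _ fun x => ?_)
    simp only [Real.rpow_two, mul_pow, exp_neg_sq_pow]
    push_cast
    ring

lemma exists_gaussian_pair {s t : ℝ} (hs : 0 < s) (ht : 0 < t) :
    ∃ (f : ℝ → ℂ) (g : ℝ → ℝ), H1C f ∧ H1R g ∧ (∀ x, 0 ≤ g x) ∧ ∫ x, ‖f x‖ ^ 2 = s ∧
      ∫ x, g x ^ 2 = t ∧ 0 < ∫ x, ‖f x‖ ^ 2 * g x := by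
  -- `∫ exp (-2 x²) = √(π / 2)` fixes the amplitudes
  set a := √(s / √(Real.pi / 2))
  set b := √(t / √(Real.pi / 2))
  have hN : 0 < √(Real.pi / 2) := by positivity
  refine ⟨fun x => ((a * Real.exp (-x ^ 2) : ℝ) : ℂ), fun x => b * Real.exp (-x ^ 2),
    (h1R_exp_neg_sq.const_mul a).ofReal, h1R_exp_neg_sq.const_mul b, fun x => by positivity,
    ?_, ?_, ?_⟩
  · simp only [Complex.norm_real, Real.norm_eq_abs, sq_abs, mul_pow, exp_neg_sq_pow,
      Nat.cast_ofNat]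
    rw [integral_const_mul, integral_gaussian, Real.sq_sqrt (by positivity)]
    field_simp
  · simp only [mul_pow, exp_neg_sq_pow, Nat.cast_ofNat]
    rw [integral_const_mul, integral_gaussian, Real.sq_sqrt (by positivity)]
    field_simp
  · have h : ∀ x, ‖((a * Real.exp (-x ^ 2) : ℝ) : ℂ)‖ ^ 2 * (b * Real.exp (-x ^ 2))
        = a ^ 2 * b * Real.exp (-x ^ 2) ^ 3 := fun x => by
      simp only [Complex.norm_real, Real.norm_eq_abs, sq_abs]
      ring
    simp only [h, exp_neg_sq_pow]
    rw [integral_const_mul, integral_gaussian]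
    have : 0 < a := Real.sqrt_pos.2 (by positivity)
    have : 0 < b := Real.sqrt_pos.2 (by positivity)
    positivity

/-- `I(s,t) < 0` for `s, t > 0`. -/
theorem Ifun_neg (α τ₁ τ₂ p q s t : ℝ)
    (hα : 0 < α) (hτ₁ : 0 ≤ τ₁) (hτ₂ : 0 < τ₂)
    (hq1 : 1 ≤ q) (hq4 : q < 4) (hp1 : 1 ≤ p) (hp4 : p < 4)
    (P : ℝ → ℝ) (hP₁ : ∀ y : ℝ, P y ≤ |y| ^ (p + 2))
    (hP₂ : ∀ y : ℝ, 0 ≤ y → P y = y ^ (p + 2))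
    (hs : 0 < s) (ht : 0 < t) :
    Ifun (2 * τ₁ / (q + 2)) (2 * τ₂ / ((p + 1) * (p + 2))) α q P s t < 0 := by
  have hβ₁ : 0 ≤ 2 * τ₁ / (q + 2) := div_nonneg (by linarith) (by linarith)
  have hβ₂ : 0 ≤ 2 * τ₂ / ((p + 1) * (p + 2)) := div_nonneg (by linarith) (by nlinarith)
  have hq : 0 ≤ q := zero_le_one.trans hq1
  have hp : 0 ≤ p := zero_le_one.trans hp1
  have hbdd := IVals_bddBelow hβ₁ hβ₂ hα.le hq hq4 hp hp4 hP₁ hs.le ht.le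
  obtain ⟨f, g, hf, hg, hg₀, rfl, rfl, hc⟩ := exists_gaussian_pair hs ht
  obtain ⟨e, he, he_neg⟩ :=
    exists_neg_mem_IVals_of_coupling_pos hβ₁ hβ₂ hα hq hp hP₂ hf hg hg₀ hc
  exact (csInf_le hbdd he).trans_lt he_neg
end
end

section
/- Suppose s > 0, t ∈ ℝ, 1 ≤ q < 4, 1 ≤ p < 4/3, β₁ = 2τ₁/(q+2), β₂ = 2τ₂/((p+1)(p+2)) with τ₁ ≥ 0, τ₂ > 0, α > 0. If (h_n, g_n) is a minimizing sequence for W(s,t) = inf{E(h,g) : H(h) = s, G(h,g) = t}, then (h_n, g_n) is bounded in Y = H¹_ℂ(ℝ) × H¹(ℝ). -/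
open MeasureTheory

noncomputable section

def Gval (h : ℝ → ℂ) (g : ℝ → ℝ) : ℝ :=
  (∫ x : ℝ, (g x) ^ 2) + (∫ x : ℝ, h x * (starRingEnd ℂ) (deriv h x)).im

def Hval (h : ℝ → ℂ) : ℝ := ∫ x : ℝ, ‖h x‖ ^ 2

/-- The set of energies of admissible pairs with `H(h) = s`, `G(h,g) = t`. -/
def WVals (β₁ β₂ α q : ℝ) (P : ℝ → ℝ) (s t : ℝ) : Set ℝ :=
  { e | ∃ h : ℝ → ℂ, ∃ g : ℝ → ℝ, H1C h ∧ H1R g ∧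
      Integrable (Edens β₁ β₂ α q P h g) ∧
      Hval h = s ∧ Gval h g = t ∧
      e = ∫ x : ℝ, Edens β₁ β₂ α q P h g x }

/-- The constrained infimum `W(s,t)`. -/
def Wfun (β₁ β₂ α q : ℝ) (P : ℝ → ℝ) (s t : ℝ) : ℝ :=
  sInf (WVals β₁ β₂ α q P s t)

/-!
Write `A = ‖h‖²`, `B = ‖h'‖²`, `D = ‖g‖²`, `F = ‖g'‖²` and `Y = 1 + A + B + D + F`. Along a
minimizing sequence `H`, `G` and `E` converge, so `A`, `G` and `E` are bounded. The
one-dimensional Agmon inequality `‖u‖∞² ≤ 2‖u‖‖u'‖` and the constraint `G` give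
`D ≤ G + ‖h‖‖h'‖ ≲ Y^(1/2)`, then `‖h‖∞² ≲ Y^(1/2)` and `‖g‖∞² ≲ Y^(3/4)`. Writing the kinetic
energy `B + F` as `E` plus the nonlinear terms, each of these is `≲ Y^θ` with
`θ = max (q/4) (3p/8 + 1/2)`, and `θ < 1` exactly when `q < 4` and `p < 4/3`. Thus
`Y ≲ Y^θ`, which forces `Y` to stay bounded.
-/

open Filter Set Asymptotics Topology
open scoped RealInnerProductSpace ComplexConjugate

lemma integral_norm_mul_norm_le_sqrt_mul_sqrt {E : Type*} [NormedAddCommGroup E] {u v : ℝ → E}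
    (hu : MemLp u 2) (hv : MemLp v 2) :
    ∫ x, ‖u x‖ * ‖v x‖ ≤ √(∫ x, ‖u x‖ ^ 2) * √(∫ x, ‖v x‖ ^ 2) := by
  simpa only [Real.rpow_two, Real.sqrt_eq_rpow, one_div] using
    integral_mul_norm_le_Lp_mul_Lq Real.HolderConjugate.two_two (by simpa using hu)
      (by simpa using hv)

section Agmon

variable {E : Type*} [NormedAddCommGroup E] [InnerProductSpace ℝ E] [CompleteSpace E]
  {f : ℝ → E}

/-- `‖f x‖²` is minus the integral of its derivative `2⟪f, f'⟫` over `(x, ∞)`. -/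
lemma norm_sq_le_two_mul_integral_norm_mul_norm_deriv (hf : Differentiable ℝ f)
    (hf₂ : MemLp f 2) (hf'₂ : MemLp (deriv f) 2) (x : ℝ) :
    ‖f x‖ ^ 2 ≤ 2 * ∫ y, ‖f y‖ * ‖deriv f y‖ := by
  have hderiv : ∀ y, HasDerivAt (‖f ·‖ ^ 2) (2 * ⟪f y, deriv f y⟫) y :=
    fun y => (hf y).hasDerivAt.norm_sq
  have hbound : ∀ y, ‖2 * ⟪f y, deriv f y⟫‖ ≤ 2 * (‖f y‖ * ‖deriv f y‖) := fun y => by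
    rw [norm_mul, Real.norm_two]
    exact mul_le_mul_of_nonneg_left (norm_inner_le_norm _ _) zero_le_two
  have hprod : Integrable fun y => ‖f y‖ * ‖deriv f y‖ := hf₂.norm.integrable_mul hf'₂.norm
  have hint : Integrable fun y => 2 * ⟪f y, deriv f y⟫ :=
    (hprod.const_mul 2).mono' ((hf.continuous.aestronglyMeasurable.inner
      (aestronglyMeasurable_deriv f volume)).const_mul 2) (Eventually.of_forall hbound)
  have hlim : Tendsto (‖f ·‖ ^ 2) atTop (𝓝 0) :=
    tendsto_zero_of_hasDerivAt_of_integrableOn_Ioi (a := x) (fun y _ => hderiv y)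
      hint.integrableOn (hf₂.integrable_norm_pow two_ne_zero).integrableOn
  have hFTC := integral_Ioi_of_hasDerivAt_of_tendsto' (a := x) (fun y _ => hderiv y)
    hint.integrableOn hlim
  calc ‖f x‖ ^ 2 = -∫ y in Ioi x, 2 * ⟪f y, deriv f y⟫ := by rw [hFTC]; ring
    _ ≤ ∫ y in Ioi x, ‖2 * ⟪f y, deriv f y⟫‖ :=
      (neg_le_abs _).trans_eq (Real.norm_eq_abs _).symm |>.trans
        (norm_integral_le_integral_norm _)
    _ ≤ ∫ y, ‖2 * ⟪f y, deriv f y⟫‖ :=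
      setIntegral_le_integral hint.norm (Eventually.of_forall fun _ => norm_nonneg _)
    _ ≤ ∫ y, 2 * (‖f y‖ * ‖deriv f y‖) := integral_mono hint.norm (hprod.const_mul 2) hbound
    _ = 2 * ∫ y, ‖f y‖ * ‖deriv f y‖ := integral_const_mul _ _

lemma norm_sq_le_two_mul_sqrt_mul_sqrt (hf : Differentiable ℝ f) (hf₂ : MemLp f 2)
    (hf'₂ : MemLp (deriv f) 2) (x : ℝ) :
    ‖f x‖ ^ 2 ≤ 2 * (√(∫ y, ‖f y‖ ^ 2) * √(∫ y, ‖deriv f y‖ ^ 2)) :=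
  (norm_sq_le_two_mul_integral_norm_mul_norm_deriv hf hf₂ hf'₂ x).trans <|
    mul_le_mul_of_nonneg_left (integral_norm_mul_norm_le_sqrt_mul_sqrt hf₂ hf'₂) zero_le_two

end Agmon

lemma rpow_add_two_le_s16 {a S r : ℝ} (ha : 0 ≤ a) (hr : 0 ≤ r) (hS : a ^ 2 ≤ S) :
    a ^ (r + 2) ≤ S ^ (r / 2) * a ^ 2 := by
  have hpow : a ^ r = (a ^ 2) ^ (r / 2) := by
    rw [← Real.rpow_two, ← Real.rpow_mul ha]; ring_nf
  rw [Real.rpow_add' ha (by positivity), Real.rpow_two, hpow]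
  gcongr

namespace Asymptotics

variable {ι : Type*} {l : Filter ι} {Y : ι → ℝ}

lemma isBigO_rpow_rpow_of_le (hY : ∀ᶠ i in l, 1 ≤ Y i) {a b : ℝ} (hab : a ≤ b) :
    (fun i => Y i ^ a) =O[l] fun i => Y i ^ b :=
  IsBigO.of_bound' <| hY.mono fun i hi => by
    have hY0 : 0 ≤ Y i := zero_le_one.trans hi
    rw [Real.norm_of_nonneg (Real.rpow_nonneg hY0 a),
      Real.norm_of_nonneg (Real.rpow_nonneg hY0 b)]
    exact Real.rpow_le_rpow_of_exponent_le hi hab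

lemma isBigO_rpow_of_nonneg_of_le (hY : ∀ᶠ i in l, 1 ≤ Y i) {u : ι → ℝ} (hu : ∀ i, 0 ≤ u i)
    (huY : ∀ i, u i ≤ Y i) : u =O[l] fun i => Y i ^ (1 : ℝ) :=
  IsBigO.of_bound' <| hY.mono fun i hi => by
    rw [Real.rpow_one, Real.norm_of_nonneg (hu i), Real.norm_of_nonneg (zero_le_one.trans hi)]
    exact huY i

lemma isBigO_one_rpow (hY : ∀ᶠ i in l, 1 ≤ Y i) {b : ℝ} (hb : 0 ≤ b) :
    (fun _ => (1 : ℝ)) =O[l] fun i => Y i ^ b :=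
  (isBigO_rpow_rpow_of_le hY hb).congr_left fun i => Real.rpow_zero (Y i)

lemma IsBigO.of_nonneg_of_le {u v : ι → ℝ} (hu : ∀ i, 0 ≤ u i) (huv : ∀ i, u i ≤ v i)
    {w : ι → ℝ} (hv : v =O[l] w) : u =O[l] w :=
  (isBigO_of_le l fun i => (Real.norm_of_nonneg (hu i)).trans_le
    ((huv i).trans (Real.le_norm_self _))).trans hv

lemma IsBigO.rpow_rpow_of_mul_le (hY : ∀ᶠ i in l, 1 ≤ Y i) {f : ι → ℝ} {a b c : ℝ}
    (hc : 0 ≤ c) (habc : a * c ≤ b) (hf : f =O[l] fun i => Y i ^ a) :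
    (fun i => f i ^ c) =O[l] fun i => Y i ^ b :=
  ((hf.rpow hc (hY.mono fun _ hi => Real.rpow_nonneg (zero_le_one.trans hi) a)).congr'
    EventuallyEq.rfl (hY.mono fun _ hi => (Real.rpow_mul (zero_le_one.trans hi) a c).symm)).trans
    (isBigO_rpow_rpow_of_le hY habc)

lemma IsBigO.sqrt_rpow_of_div_le (hY : ∀ᶠ i in l, 1 ≤ Y i) {f : ι → ℝ} {a b : ℝ}
    (hab : a / 2 ≤ b) (hf : f =O[l] fun i => Y i ^ a) :
    (fun i => √(f i)) =O[l] fun i => Y i ^ b := by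
  simpa only [Real.sqrt_eq_rpow] using hf.rpow_rpow_of_mul_le hY one_half_pos.le (by linarith)

lemma IsBigO.mul_rpow_of_add_le (hY : ∀ᶠ i in l, 1 ≤ Y i) {f g : ι → ℝ} {a b c : ℝ}
    (habc : a + b ≤ c) (hf : f =O[l] fun i => Y i ^ a) (hg : g =O[l] fun i => Y i ^ b) :
    (fun i => f i * g i) =O[l] fun i => Y i ^ c :=
  ((hf.mul hg).congr' EventuallyEq.rfl (hY.mono fun _ hi =>
    (Real.rpow_add (zero_lt_one.trans_le hi) a b).symm)).trans (isBigO_rpow_rpow_of_le hY habc)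

lemma IsBigO.isBigO_one_of_rpow (hY : ∀ᶠ i in l, 1 ≤ Y i) {θ : ℝ} (hθ : θ < 1)
    (h : Y =O[l] fun i => Y i ^ θ) : Y =O[l] fun _ => (1 : ℝ) := by
  obtain ⟨c, hc⟩ := h.bound
  refine IsBigO.of_bound (c ^ (1 - θ)⁻¹) ((hc.and hY).mono fun i hi => ?_)
  obtain ⟨hci, hi⟩ := hi
  have hY0 : 0 < Y i := zero_lt_one.trans_le hi
  rw [Real.norm_of_nonneg hY0.le, Real.norm_of_nonneg (Real.rpow_nonneg hY0.le θ)] at hci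
  have hpow : Y i ^ (1 - θ) ≤ c := by
    rw [Real.rpow_sub hY0, Real.rpow_one, div_le_iff₀ (Real.rpow_pos_of_pos hY0 θ)]
    exact hci
  rw [norm_one, mul_one, Real.norm_of_nonneg hY0.le]
  calc Y i = (Y i ^ (1 - θ)) ^ (1 - θ)⁻¹ := by
        rw [← Real.rpow_mul hY0.le, mul_inv_cancel₀ (by linarith), Real.rpow_one]
    _ ≤ c ^ (1 - θ)⁻¹ :=
        Real.rpow_le_rpow (Real.rpow_nonneg hY0.le _) hpow (inv_nonneg.2 (by linarith))

end Asymptotics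

lemma integral_sq_le_Gval_add {h : ℝ → ℂ} (g : ℝ → ℝ) (hh₂ : MemLp h 2)
    (hh'₂ : MemLp (deriv h) 2) :
    ∫ x, g x ^ 2 ≤ Gval h g + √(∫ x, ‖h x‖ ^ 2) * √(∫ x, ‖deriv h x‖ ^ 2) := by
  have hcross : -(∫ x, h x * conj (deriv h x)).im ≤ ∫ x, ‖h x‖ * ‖deriv h x‖ :=
    calc -(∫ x, h x * conj (deriv h x)).im
        ≤ ‖∫ x, h x * conj (deriv h x)‖ := (neg_le_abs _).trans (Complex.abs_im_le_norm _)
      _ ≤ ∫ x, ‖h x * conj (deriv h x)‖ := norm_integral_le_integral_norm _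
      _ = ∫ x, ‖h x‖ * ‖deriv h x‖ := by simp only [norm_mul, Complex.norm_conj]
  have hCS := integral_norm_mul_norm_le_sqrt_mul_sqrt hh₂ hh'₂
  rw [Gval]
  linarith

lemma kinetic_le_energy_add {β₁ β₂ α p q : ℝ} {P : ℝ → ℝ} {h : ℝ → ℂ} {g : ℝ → ℝ}
    (hβ₁ : 0 ≤ β₁) (hβ₂ : 0 ≤ β₂) (hα : 0 ≤ α) (hq : 0 ≤ q) (hp : 0 ≤ p)
    (hP : ∀ y, P y ≤ |y| ^ (p + 2)) (hh : H1C h) (hg : H1R g)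
    (hE : Integrable (Edens β₁ β₂ α q P h g)) :
    (∫ x, ‖deriv h x‖ ^ 2) + ∫ x, deriv g x ^ 2 ≤ (∫ x, Edens β₁ β₂ α q P h g x)
      + β₁ * ((2 * (√(∫ x, ‖h x‖ ^ 2) * √(∫ x, ‖deriv h x‖ ^ 2))) ^ (q / 2) * ∫ x, ‖h x‖ ^ 2)
      + β₂ * ((2 * (√(∫ x, g x ^ 2) * √(∫ x, deriv g x ^ 2))) ^ (p / 2) * ∫ x, g x ^ 2)
      + α * (√(2 * (√(∫ x, g x ^ 2) * √(∫ x, deriv g x ^ 2))) * ∫ x, ‖h x‖ ^ 2) := by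
  obtain ⟨hhd, hh₂, hh'₂⟩ := hh
  obtain ⟨hgd, hg₂, hg'₂⟩ := hg
  set Sh := 2 * (√(∫ x, ‖h x‖ ^ 2) * √(∫ x, ‖deriv h x‖ ^ 2))
  set Sg := 2 * (√(∫ x, g x ^ 2) * √(∫ x, deriv g x ^ 2))
  have hSh : ∀ x, ‖h x‖ ^ 2 ≤ Sh := norm_sq_le_two_mul_sqrt_mul_sqrt hhd hh₂ hh'₂
  have hSg : ∀ x, g x ^ 2 ≤ Sg := by
    simpa only [Real.norm_eq_abs, sq_abs] using norm_sq_le_two_mul_sqrt_mul_sqrt hgd hg₂ hg'₂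
  have hpt : ∀ x, ‖deriv h x‖ ^ 2 + deriv g x ^ 2 - Edens β₁ β₂ α q P h g x
      ≤ β₁ * (Sh ^ (q / 2) * ‖h x‖ ^ 2) + β₂ * (Sg ^ (p / 2) * g x ^ 2)
        + α * (√Sg * ‖h x‖ ^ 2) := fun x => by
    have h₁ := rpow_add_two_le_s16 (norm_nonneg (h x)) hq (hSh x)
    have h₂ : P (g x) ≤ Sg ^ (p / 2) * g x ^ 2 := by
      simpa only [sq_abs] using
        (hP (g x)).trans (rpow_add_two_le_s16 (abs_nonneg (g x)) hp (by simpa using hSg x))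
    have h₃ : g x ≤ √Sg := (le_abs_self _).trans (Real.abs_le_sqrt (hSg x))
    rw [Edens]
    nlinarith [mul_le_mul_of_nonneg_left h₁ hβ₁, mul_le_mul_of_nonneg_left h₂ hβ₂,
      mul_le_mul_of_nonneg_left h₃ (mul_nonneg hα (sq_nonneg ‖h x‖))]
  have hA := hh₂.integrable_norm_pow two_ne_zero
  have hB := hh'₂.integrable_norm_pow two_ne_zero
  have hD := hg₂.integrable_sq
  have hF := hg'₂.integrable_sq
  have hA₁ : Integrable fun x => β₁ * (Sh ^ (q / 2) * ‖h x‖ ^ 2) := (hA.const_mul _).const_mul _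
  have hD₂ : Integrable fun x => β₂ * (Sg ^ (p / 2) * g x ^ 2) := (hD.const_mul _).const_mul _
  have hA₃ : Integrable fun x => α * (√Sg * ‖h x‖ ^ 2) := (hA.const_mul _).const_mul _
  have hBF : Integrable fun x => ‖deriv h x‖ ^ 2 + deriv g x ^ 2 := hB.add hF
  have hAD : Integrable fun x =>
      β₁ * (Sh ^ (q / 2) * ‖h x‖ ^ 2) + β₂ * (Sg ^ (p / 2) * g x ^ 2) := hA₁.add hD₂
  have hmono := integral_mono (hBF.sub hE) (hAD.add hA₃) hpt
  simp only [Pi.add_apply, Pi.sub_apply] at hmono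
  rw [integral_sub hBF hE, integral_add hB hF, integral_add hAD hA₃,
    integral_add hA₁ hD₂] at hmono
  simp only [integral_const_mul] at hmono
  linarith

theorem isBigO_one_of_kinetic_le {ι : Type*} {l : Filter ι} {A B D F E G : ι → ℝ}
    {β₁ β₂ α p q : ℝ}
    (hq : 0 ≤ q) (hq4 : q < 4) (hp : 0 ≤ p) (hp43 : p < 4 / 3)
    (hA0 : ∀ i, 0 ≤ A i) (hB0 : ∀ i, 0 ≤ B i) (hD0 : ∀ i, 0 ≤ D i) (hF0 : ∀ i, 0 ≤ F i)
    (hA : A =O[l] fun _ => (1 : ℝ)) (hE : E =O[l] fun _ => (1 : ℝ))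
    (hG : G =O[l] fun _ => (1 : ℝ)) (hD : ∀ i, D i ≤ G i + √(A i) * √(B i))
    (hkin : ∀ i, B i + F i ≤ E i + β₁ * ((2 * (√(A i) * √(B i))) ^ (q / 2) * A i)
      + β₂ * ((2 * (√(D i) * √(F i))) ^ (p / 2) * D i) + α * (√(2 * (√(D i) * √(F i))) * A i)) :
    (fun i => A i + B i + D i + F i) =O[l] fun _ => (1 : ℝ) := by
  set Y := fun i => 1 + A i + B i + D i + F i
  have hY : ∀ᶠ i in l, 1 ≤ Y i := Eventually.of_forall fun i => by
    simp only [Y]; linarith [hA0 i, hB0 i, hD0 i, hF0 i]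
  set θ := max (q / 4) (3 * p / 8 + 1 / 2)
  have hA' : A =O[l] fun i => Y i ^ (0 : ℝ) := hA.trans (isBigO_one_rpow hY le_rfl)
  have hsA : (fun i => √(A i)) =O[l] fun i => Y i ^ (0 : ℝ) :=
    hA'.sqrt_rpow_of_div_le hY (by norm_num)
  have hsB : (fun i => √(B i)) =O[l] fun i => Y i ^ (1 / 2 : ℝ) :=
    (isBigO_rpow_of_nonneg_of_le hY hB0 fun i => by simp only [Y]; linarith [hA0 i, hD0 i, hF0 i]
      ).sqrt_rpow_of_div_le hY le_rfl
  have hAB : (fun i => √(A i) * √(B i)) =O[l] fun i => Y i ^ (1 / 2 : ℝ) :=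
    hsA.mul_rpow_of_add_le hY (by norm_num) hsB
  have hD' : D =O[l] fun i => Y i ^ (1 / 2 : ℝ) :=
    IsBigO.of_nonneg_of_le hD0 hD ((hG.trans (isBigO_one_rpow hY (by norm_num))).add hAB)
  have hsD : (fun i => √(D i)) =O[l] fun i => Y i ^ (1 / 4 : ℝ) :=
    hD'.sqrt_rpow_of_div_le hY (by norm_num)
  have hsF : (fun i => √(F i)) =O[l] fun i => Y i ^ (1 / 2 : ℝ) :=
    (isBigO_rpow_of_nonneg_of_le hY hF0 fun i => by simp only [Y]; linarith [hA0 i, hB0 i, hD0 i]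
      ).sqrt_rpow_of_div_le hY le_rfl
  have hSh : (fun i => 2 * (√(A i) * √(B i))) =O[l] fun i => Y i ^ (1 / 2 : ℝ) :=
    hAB.const_mul_left 2
  have hSg : (fun i => 2 * (√(D i) * √(F i))) =O[l] fun i => Y i ^ (3 / 4 : ℝ) :=
    (hsD.mul_rpow_of_add_le hY (by norm_num) hsF).const_mul_left 2
  have hT₁ := ((hSh.rpow_rpow_of_mul_le hY (by linarith : 0 ≤ q / 2) le_rfl).mul_rpow_of_add_le
    hY (le_max_of_le_left (by linarith) : _ ≤ θ) hA').const_mul_left β₁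
  have hT₂ := ((hSg.rpow_rpow_of_mul_le hY (by linarith : 0 ≤ p / 2) le_rfl).mul_rpow_of_add_le
    hY (le_max_of_le_right (by linarith) : _ ≤ θ) hD').const_mul_left β₂
  have hT₃ := ((hSg.sqrt_rpow_of_div_le hY le_rfl).mul_rpow_of_add_le hY
    (le_max_of_le_right (by linarith) : _ ≤ θ) hA').const_mul_left α
  have hR := ((((isBigO_one_rpow hY (by positivity : (0 : ℝ) ≤ θ)).add
    (hA'.trans (isBigO_rpow_rpow_of_le hY (by positivity)))).add
    (hD'.trans (isBigO_rpow_rpow_of_le hY (le_max_of_le_right (by linarith))))).add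
    (hE.trans (isBigO_one_rpow hY (by positivity)))).add hT₁ |>.add hT₂ |>.add hT₃
  have hYθ : Y =O[l] fun i => Y i ^ θ :=
    IsBigO.of_nonneg_of_le (fun i => by simp only [Y]; linarith [hA0 i, hB0 i, hD0 i, hF0 i])
      (fun i => by simp only [Y]; linarith [hkin i]) hR
  exact IsBigO.of_nonneg_of_le (fun i => by linarith [hA0 i, hB0 i, hD0 i, hF0 i])
    (fun i => by simp only [Y]; linarith)
    (hYθ.isBigO_one_of_rpow hY (max_lt (by linarith) (by linarith)))

theorem W_minimizing_seq_bounded_general (α τ₁ τ₂ p q : ℝ)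
    (hα : 0 < α) (hτ₁ : 0 ≤ τ₁) (hτ₂ : 0 < τ₂)
    (hq1 : 1 ≤ q) (hq4 : q < 4) (hp1 : 1 ≤ p) (hp43 : p < 4 / 3)
    (P : ℝ → ℝ) (hP₁ : ∀ y : ℝ, P y ≤ |y| ^ (p + 2))
    (s t : ℝ)
    (h : ℕ → ℝ → ℂ) (g : ℕ → ℝ → ℝ)
    (hmem : ∀ n, H1C (h n) ∧ H1R (g n) ∧
      Integrable (Edens (2 * τ₁ / (q + 2)) (2 * τ₂ / ((p + 1) * (p + 2))) α q P (h n) (g n)))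
    (hHs : Filter.Tendsto (fun n => Hval (h n)) Filter.atTop (nhds s))
    (hGt : Filter.Tendsto (fun n => Gval (h n) (g n)) Filter.atTop (nhds t))
    (hE : Filter.Tendsto
      (fun n => ∫ x : ℝ, Edens (2 * τ₁ / (q + 2)) (2 * τ₂ / ((p + 1) * (p + 2))) α q P (h n) (g n) x)
      Filter.atTop
      (nhds (Wfun (2 * τ₁ / (q + 2)) (2 * τ₂ / ((p + 1) * (p + 2))) α q P s t))) :
    ∃ C : ℝ, ∀ n,
      (∫ x : ℝ, ‖h n x‖ ^ 2) + (∫ x : ℝ, ‖deriv (h n) x‖ ^ 2) +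
        (∫ x : ℝ, (g n x) ^ 2) + (∫ x : ℝ, (deriv (g n) x) ^ 2) ≤ C := by
  have hβ₁ : 0 ≤ 2 * τ₁ / (q + 2) := div_nonneg (by linarith) (by linarith)
  have hβ₂ : 0 ≤ 2 * τ₂ / ((p + 1) * (p + 2)) := div_nonneg (by linarith) (by nlinarith)
  have hbdd := isBigO_one_of_kinetic_le (by linarith) hq4 (by linarith) hp43
    (fun n => integral_nonneg fun x => sq_nonneg ‖h n x‖)
    (fun n => integral_nonneg fun x => sq_nonneg ‖deriv (h n) x‖)
    (fun n => integral_nonneg fun x => sq_nonneg (g n x))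
    (fun n => integral_nonneg fun x => sq_nonneg (deriv (g n) x))
    (hHs.isBigO_one ℝ) (hE.isBigO_one ℝ) (hGt.isBigO_one ℝ)
    (fun n => integral_sq_le_Gval_add (g n) (hmem n).1.2.1 (hmem n).1.2.2)
    (fun n => kinetic_le_energy_add hβ₁ hβ₂ hα.le (by linarith) (by linarith) hP₁
      (hmem n).1 (hmem n).2.1 (hmem n).2.2)
  obtain ⟨C, hC⟩ := hbdd.isBoundedUnder_le.bddAbove_range
  exact ⟨C, fun n => (Real.le_norm_self _).trans (hC ⟨n, rfl⟩)⟩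

/-- Every minimizing sequence for `W(s,t)` is bounded in `Y = H¹_ℂ × H¹`. -/
theorem W_minimizing_seq_bounded (α τ₁ τ₂ p q : ℝ)
    (hα : 0 < α) (hτ₁ : 0 ≤ τ₁) (hτ₂ : 0 < τ₂)
    (hq1 : 1 ≤ q) (hq4 : q < 4) (hp1 : 1 ≤ p) (hp43 : p < 4 / 3)
    (P : ℝ → ℝ) (hP₁ : ∀ y : ℝ, P y ≤ |y| ^ (p + 2))
    (hP₂ : ∀ y : ℝ, 0 ≤ y → P y = y ^ (p + 2))
    (s t : ℝ) (hs : 0 < s)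
    (h : ℕ → ℝ → ℂ) (g : ℕ → ℝ → ℝ)
    (hmem : ∀ n, H1C (h n) ∧ H1R (g n) ∧
      Integrable (Edens (2 * τ₁ / (q + 2)) (2 * τ₂ / ((p + 1) * (p + 2))) α q P (h n) (g n)))
    (hHs : Filter.Tendsto (fun n => Hval (h n)) Filter.atTop (nhds s))
    (hGt : Filter.Tendsto (fun n => Gval (h n) (g n)) Filter.atTop (nhds t))
    (hE : Filter.Tendsto
      (fun n => ∫ x : ℝ, Edens (2 * τ₁ / (q + 2)) (2 * τ₂ / ((p + 1) * (p + 2))) α q P (h n) (g n) x)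
      Filter.atTop
      (nhds (Wfun (2 * τ₁ / (q + 2)) (2 * τ₂ / ((p + 1) * (p + 2))) α q P s t))) :
    ∃ C : ℝ, ∀ n,
      (∫ x : ℝ, ‖h n x‖ ^ 2) + (∫ x : ℝ, ‖deriv (h n) x‖ ^ 2) +
        (∫ x : ℝ, (g n x) ^ 2) + (∫ x : ℝ, (deriv (g n) x) ^ 2) ≤ C :=
  W_minimizing_seq_bounded_general α τ₁ τ₂ p q hα hτ₁ hτ₂ hq1 hq4 hp1 hp43 P hP₁ s t h g hmem hHs
    hGt hE
end
end
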